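/- arXiv:1712.10056 — 3 statements merged into one kernel-verified Lean document; each statement's English description precedes it below -/
import Mathlib

section
/- For a multi-valued (MV) register where the state is the set of maximal (with respect to a partial 'happens-before' order on vector clocks) updates received, the state depends only on the set of updates delivered, independent of delivery order and multiplicity. -/
/-
Folding `mvInsert` over a nonempty list of updates computes the maximal elements of the
initial state together with all delivered updates. The point is that passing to maximal
elements forgets nothing that later maximality tests can see: every element of a finite set
lies below one of its maximal elements, so `maximals (A ∪ maximals B) = maximals (A ∪ B)`.
Only the empty list is special, since folding over it leaves the initial state untouched
rather than reducing it to its maximal elements.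
-/

open Classical in
/-- MV-register insertion: applying an update `u` to a state `S` yields the
set of maximal elements of `S ∪ {u}` (with respect to the partial
happens-before order on vector clocks). -/
noncomputable def mvInsert {α : Type} [PartialOrder α] [DecidableEq α]
    (S : Finset α) (u : α) : Finset α :=
  (insert u S).filter (fun x => ∀ y ∈ insert u S, ¬ x < y)

open Finset

open Classical in
noncomputable def maximals {α : Type} [PartialOrder α] (S : Finset α) : Finset α :=
  S.filter (Maximal (· ∈ S))

section Maximals

variable {α : Type} [PartialOrder α]

@[simp]
theorem mem_maximals {S : Finset α} {x : α} : x ∈ maximals S ↔ Maximal (· ∈ S) x := by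
  simpa [maximals] using Maximal.prop

variable [DecidableEq α]

theorem maximals_union_maximals (A B : Finset α) :
    maximals (A ∪ maximals B) = maximals (A ∪ B) := by
  ext x
  simp only [mem_maximals]
  refine (maximal_iff_maximal_of_imp_of_forall (fun y hy => ?_) (fun y hy => ?_)).symm
  · simp only [mem_union, mem_maximals] at hy ⊢
    exact hy.imp_right Maximal.prop
  · rcases mem_union.mp hy with hyA | hyB
    · exact ⟨y, le_rfl, mem_union_left _ hyA⟩
    · obtain ⟨z, hyz, hz⟩ := B.exists_le_maximal hyB
      exact ⟨z, hyz, mem_union_right A (mem_maximals.mpr hz)⟩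

theorem mvInsert_eq_maximals (S : Finset α) (u : α) : mvInsert S u = maximals (insert u S) := by
  ext x
  simp only [mvInsert, mem_filter, mem_maximals, maximal_iff_forall_gt]
  exact and_congr_right fun _ => ⟨fun h y hxy hy => h y hy hxy, fun h y hy hxy => h hxy hy⟩

theorem foldl_mvInsert_maximals (A : Finset α) (l : List α) :
    l.foldl mvInsert (maximals A) = maximals (A ∪ l.toFinset) := by
  induction l generalizing A with
  | nil => simp
  | cons u t ih =>
    rw [List.foldl_cons, mvInsert_eq_maximals, insert_eq, maximals_union_maximals, ← insert_eq, ih,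
      List.toFinset_cons, insert_union, union_insert]

theorem foldl_mvInsert_of_ne_nil (S : Finset α) {l : List α} (hl : l ≠ []) :
    l.foldl mvInsert S = maximals (S ∪ l.toFinset) := by
  obtain ⟨u, t, rfl⟩ := List.exists_cons_of_ne_nil hl
  rw [List.foldl_cons, mvInsert_eq_maximals, foldl_mvInsert_maximals, List.toFinset_cons,
    insert_union, union_insert]

end Maximals

/-- For a multi-valued register, the state (the antichain of maximal received
updates) depends only on the set of updates delivered, independent of delivery
order and multiplicity. -/
theorem mv_state_depends_only_on_set
    {α : Type} [PartialOrder α] [DecidableEq α]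
    (S₀ : Finset α) (l₁ l₂ : List α)
    (hsame : ∀ u, u ∈ l₁ ↔ u ∈ l₂) :
    l₁.foldl mvInsert S₀ = l₂.foldl mvInsert S₀ := by
  have hnil : l₁ = [] ↔ l₂ = [] := by
    simp only [List.eq_nil_iff_forall_not_mem, hsame]
  by_cases h₁ : l₁ = []
  · rw [h₁, hnil.mp h₁]
  have htoFinset : l₁.toFinset = l₂.toFinset := by
    ext u
    simpa using hsame u
  rw [foldl_mvInsert_of_ne_nil S₀ h₁, foldl_mvInsert_of_ne_nil S₀ (mt hnil.mpr h₁), htoFinset]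
end

section
/- Eventual delivery plus idempotent commutative terminating update operations imply strong eventual consistency: in any fair execution where every write is eventually delivered to every replica at least once, all replicas' states eventually stabilize to a common value determined solely by the set of successful writes. -/
/-- Eventual delivery plus an idempotent, commutative (terminating) update
function implies strong eventual consistency: in any execution where every
write is eventually delivered to every replica at least once (and only
finitely many writes occur), all replicas' states eventually stabilize to a
common value determined solely by the set of successful writes. -/
theorem eventual_delivery_implies_strong_eventual_consistency
    {Replica Write State : Type}
    (f : State → Write → State)
    (comm : ∀ s u v, f (f s u) v = f (f s v) u)
    (idem : ∀ s u, f (f s u) u = f s u)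
    (writes : Finset Write)                      -- the (finite) set of writes
    (deliver : Replica → ℕ → Option Write)       -- delivery sequence per replica
    (state : Replica → ℕ → State)                -- state sequence per replica
    (s₀ : State)
    (hinit : ∀ r, state r 0 = s₀)
    -- the state evolves by applying each delivered write:
    (hstep : ∀ r n, state r (n + 1) =
        match deliver r n with
        | some w => f (state r n) w
        | none => state r n)
    -- only issued writes are delivered:
    (hdom : ∀ r n w, deliver r n = some w → w ∈ writes)
    -- eventual delivery: every write reaches every replica at least once:
    (hdeliv : ∀ w ∈ writes, ∀ r, ∃ n, deliver r n = some w) :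
    ∃ c : State, ∀ r, ∃ N, ∀ n, N ≤ n → state r n = c := by
  classical
  haveI : RightCommutative f := ⟨comm⟩
  -- delivered list so far
  set dl : Replica → ℕ → List Write := fun r n => (List.range n).filterMap (deliver r) with hdl
  -- state equals fold of the delivered list
  have hstate : ∀ r n, state r n = (dl r n).foldl f s₀ := by
    intro r n
    induction n with
    | zero => simpa [hdl] using hinit r
    | succ n ih =>
      have hr : List.range (n+1) = List.range n ++ [n] := by
        simp [List.range_succ]
      rw [hstep r n, ih]
      cases h : deliver r n with
      | none => simp [hdl, hr, List.filterMap_append, h]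
      | some w => simp [hdl, hr, List.filterMap_append, h]
  -- duplicate removal
  have dup : ∀ (s : State) (a : Write) (l : List Write), a ∈ l →
      (a :: l).foldl f s = l.foldl f s := by
    intro s a l ha
    have hp : List.Perm l (a :: l.erase a) := List.perm_cons_erase ha
    have h1 : l.foldl f s = (a :: l.erase a).foldl f s := hp.foldl_eq s
    have h2 : (a :: l).foldl f s = (a :: a :: l.erase a).foldl f s :=
      (List.Perm.cons a hp).foldl_eq s
    rw [h1, h2]
    simp [List.foldl_cons, idem]
  have dedup_eq : ∀ (l : List Write) (s : State), l.foldl f s = l.dedup.foldl f s := by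
    intro l
    induction l with
    | nil => intro s; simp
    | cons a l ih =>
      intro s
      by_cases ha : a ∈ l
      · rw [List.dedup_cons_of_mem ha, dup s a l ha, ih]
      · rw [List.dedup_cons_of_notMem ha]
        simp only [List.foldl_cons]
        exact ih (f s a)
  -- fold depends only on toFinset
  have set_eq : ∀ (l₁ l₂ : List Write), l₁.toFinset = l₂.toFinset →
      ∀ s, l₁.foldl f s = l₂.foldl f s := by
    intro l₁ l₂ h s
    have hp : List.Perm l₁.dedup l₂.dedup := by
      apply List.Perm.symm
      apply (List.perm_ext_iff_of_nodup (List.nodup_dedup _) (List.nodup_dedup _)).2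
      intro a
      have := Finset.ext_iff.1 h a
      simpa [List.mem_toFinset, List.mem_dedup] using this.symm
    rw [dedup_eq l₁ s, dedup_eq l₂ s, hp.foldl_eq s]
  refine ⟨writes.toList.foldl f s₀, fun r => ?_⟩
  choose t ht using fun w (hw : w ∈ writes) => hdeliv w hw r
  refine ⟨(writes.attach.sup fun w => t w.1 w.2) + 1, fun n hn => ?_⟩
  rw [hstate r n]
  apply set_eq
  · ext a
    simp only [List.mem_toFinset, hdl, List.mem_filterMap, List.mem_range,
      Finset.mem_toList]
    constructor
    · rintro ⟨k, _, hk⟩; exact hdom r k a hk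
    · intro ha
      refine ⟨t a ha, ?_, ht a ha⟩
      have : t a ha ≤ writes.attach.sup fun w => t w.1 w.2 :=
        Finset.le_sup (f := fun w => t w.1 w.2) (Finset.mem_attach _ ⟨a, ha⟩)
      omega
end

section
/- Read-repair convergence requires continued reads: there exists an execution in the lag model with one pending message where exactly one read-repair occurs (and then reads stop) and the replicas never converge, whereas any fair execution with infinitely many read-repairs converges. -/
/-- Events of the abstract "lag" model: deliveries of pending messages,
read-repairs, and plain reads. -/
inductive LagEvent | delivery | readRepair | read

/-- A (no-new-writes) execution of the lag model: `P` is the finite multiset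
of pending messages, `st` the replica states, `R` the live replicas. -/
structure LagExec (Msg Replica Value : Type) [DecidableEq Msg] where
  R : Set Replica
  ev : ℕ → LagEvent
  P : ℕ → Multiset Msg
  st : ℕ → Replica → Value
  /-- a delivery removes one pending message and may update one replica -/
  hdeliv : ∀ n, ev n = .delivery →
    (∃ m ∈ P n, P (n + 1) = (P n).erase m) ∧
    (∃ r₀, ∀ r, r ≠ r₀ → st (n + 1) r = st n r)
  /-- an (uninterleaved) read-repair delivers no message and sets all live
  replicas to a common value, one of the values read -/
  hrr : ∀ n, ev n = .readRepair →
    P (n + 1) = P n ∧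
    ∃ v, (∃ r ∈ R, st n r = v) ∧ ∀ r ∈ R, st (n + 1) r = v
  /-- a plain read changes nothing -/
  hread : ∀ n, ev n = .read → P (n + 1) = P n ∧ st (n + 1) = st n

/-- Read-repair convergence requires continued reads.
Part 1: there exists an execution of the lag model with a single pending
message in which exactly one read-repair occurs — completed before the
delivery — then the pending message is delivered to one replica and no
further read-repairs occur, and the (two) live replicas remain permanently
unequal.
Part 2: in any execution with infinitely many read-repairs, the live
replicas eventually converge to a common value. -/
theorem read_repair_requires_continued_reads :
    -- Part 1: a counterexample with one pending message and a single read-repair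
    (∃ E : LagExec Unit Bool ℕ,
      E.R = Set.univ ∧
      Multiset.card (E.P 0) = 1 ∧
      E.ev 0 = .readRepair ∧ E.ev 1 = .delivery ∧
      (∀ n, n ≠ 0 → E.ev n ≠ .readRepair) ∧
      (∀ n, 2 ≤ n → E.st n true ≠ E.st n false)) ∧
    -- Part 2: with infinitely many read-repairs, convergence holds
    (∀ (Msg Replica Value : Type) [DecidableEq Msg] [Nonempty Value]
        (E : LagExec Msg Replica Value),
      (∀ N, ∃ n, N ≤ n ∧ E.ev n = .readRepair) →
      ∃ (N : ℕ) (v : Value), ∀ n, N ≤ n → ∀ r ∈ E.R, E.st n r = v) := by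
  constructor
  · -- Part 1
    refine ⟨⟨Set.univ,
      fun n => match n with | 0 => .readRepair | 1 => .delivery | _ => .read,
      fun n => if n ≤ 1 then {()} else 0,
      fun n r => if 2 ≤ n ∧ r = true then 1 else 0, ?_, ?_, ?_⟩,
      rfl, rfl, rfl, rfl, ?_, ?_⟩
    · intro n hn
      match n, hn with
      | 1, _ =>
        refine ⟨⟨(), by simp, by simp⟩, true, fun r hr => ?_⟩
        simp [Bool.eq_false_iff.mpr hr]
      | 0, h => simp at h
      | (k+2), h => simp at h
    · intro n hn
      match n, hn with
      | 0, _ => exact ⟨rfl, 0, ⟨true, trivial, by simp⟩, fun r _ => by simp⟩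
      | 1, h => simp at h
      | (k+2), h => simp at h
    · intro n hn
      match n, hn with
      | (k+2), _ =>
        constructor
        · simp [Nat.not_le_of_lt (by omega : 1 < k + 2),
            Nat.not_le_of_lt (by omega : 1 < k + 3)]
        · funext r
          by_cases hr : r = true <;>
            simp [hr, show 2 ≤ k + 3 by omega, show 2 ≤ k + 2 by omega]
      | 0, h => simp at h
      | 1, h => simp at h
    · rintro n hn h
      match n, hn, h with
      | 1, _, h => exact absurd h (by simp)
      | (k+2), _, h => exact absurd h (by simp)
      | 0, hn, _ => exact absurd rfl hn
    · intro n hn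
      simp [hn]
  · -- Part 2
    intro Msg Replica Value _ _ E hinf
    -- the cardinality of P is antitone
    have hanti : ∀ n, Multiset.card (E.P (n+1)) ≤ Multiset.card (E.P n) := by
      intro n
      cases h : E.ev n with
      | delivery =>
        obtain ⟨⟨m, hm, hP⟩, _⟩ := E.hdeliv n h
        rw [hP]
        exact le_trans (Multiset.card_erase_le) le_rfl
      | readRepair => rw [(E.hrr n h).1]
      | read => rw [(E.hread n h).1]
    have hmono : ∀ {a b}, a ≤ b → Multiset.card (E.P b) ≤ Multiset.card (E.P a) := by
      intro a b hab
      induction b with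
      | zero => simp_all
      | succ b ih =>
        rcases Nat.lt_or_ge a (b+1) with h | h
        · exact le_trans (hanti b) (ih (by omega))
        · have : a = b + 1 := by omega
          subst this; rfl
    -- eventually no deliveries
    obtain ⟨N, hN⟩ : ∃ N, ∀ n, N ≤ n → E.ev n ≠ .delivery := by
      set m := sInf (Set.range (fun n => Multiset.card (E.P n))) with hm
      obtain ⟨N, hNm⟩ : ∃ N, Multiset.card (E.P N) = m :=
        csInf_mem (Set.range_nonempty _)
      refine ⟨N, fun n hn hd => ?_⟩
      have h1 : Multiset.card (E.P n) = m :=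
        le_antisymm (hNm ▸ hmono hn) (csInf_le (OrderBot.bddBelow _) ⟨n, rfl⟩)
      have h2 : Multiset.card (E.P (n+1)) = m :=
        le_antisymm (hNm ▸ hmono (by omega)) (csInf_le (OrderBot.bddBelow _) ⟨n+1, rfl⟩)
      obtain ⟨⟨mg, hmg, hP⟩, _⟩ := E.hdeliv n hd
      rw [hP, Multiset.card_erase_of_mem hmg, h1] at h2
      have : 0 < m := h1 ▸ Multiset.card_pos.mpr (by exact fun he => by simp [he] at hmg)
      rw [Nat.pred_eq_sub_one] at h2
      omega
    -- pick a read-repair after N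
    obtain ⟨n₁, hn₁, hrr₁⟩ := hinf N
    obtain ⟨_, v, _, hv⟩ := E.hrr n₁ hrr₁
    refine ⟨n₁ + 1, v, fun n hn => ?_⟩
    induction n with
    | zero => omega
    | succ n ih =>
      rcases Nat.lt_or_ge n (n₁ + 1) with h | h
      · have : n = n₁ := by omega
        subst this; exact hv
      · have ihn := ih (by omega)
        cases h' : E.ev n with
        | delivery => exact absurd h' (hN n (by omega))
        | readRepair =>
          obtain ⟨_, w, ⟨r₀, hr₀, hr₀v⟩, hw⟩ := E.hrr n h'
          intro r hr
          rw [hw r hr, ← hr₀v, ihn r₀ hr₀]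
        | read =>
          intro r hr
          rw [(E.hread n h').2, ihn r hr]
end
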